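/- arXiv:1903.02517 — 3 statements merged into one kernel-verified Lean document; each statement's English description precedes it below -/
import Mathlib

section
/- If X follows a Gamma distribution with shape parameter k and scale γ/k (so that E[X] = γ), then the integrated squared error between the exponential density with rate 1/γ and the exponential density with rate 1/X has expectation E[1/(2γ) - 2/(γ+X) + 1/(2X)] = 1/(2γ) - (2/γ)·e^k·k^k·Γ(1-k,k) + k/(2(k-1)γ) for k > 1, where Γ(a,b) is the upper incomplete gamma function. -/
open MeasureTheory Real

set_option maxHeartbeats 1000000

lemma intOn_rpow_exp {s b : ℝ} (hs : -1 < s) (hb : 0 < b) :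
    IntegrableOn (fun x : ℝ => x ^ s * Real.exp (-(b * x))) (Set.Ioi 0) := by
  have h := integrableOn_rpow_mul_exp_neg_mul_rpow (p := 1) hs one_pos hb
  refine h.congr_fun (fun x hx => ?_) measurableSet_Ioi
  show x ^ s * Real.exp (-b * x ^ (1:ℝ)) = _
  rw [Real.rpow_one, neg_mul]

lemma intOn_exp {b : ℝ} (hb : 0 < b) :
    IntegrableOn (fun x : ℝ => Real.exp (-(b * x))) (Set.Ioi 0) := by
  have h := intOn_rpow_exp (s := 0) (by norm_num) hb
  refine h.congr_fun (fun x hx => ?_) measurableSet_Ioi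
  show x ^ (0:ℝ) * Real.exp (-(b * x)) = _
  rw [Real.rpow_zero, one_mul]

lemma integral_exp_Ioi {b : ℝ} (hb : 0 < b) :
    ∫ x in Set.Ioi (0:ℝ), Real.exp (-(b * x)) = 1 / b := by
  have h := Real.integral_rpow_mul_exp_neg_mul_Ioi (a := 1) one_pos hb
  rw [Real.rpow_one, Real.Gamma_one, mul_one] at h
  rw [← h]
  refine setIntegral_congr_fun measurableSet_Ioi (fun x hx => ?_)
  norm_num

lemma intOn_inv_mul {γ s b : ℝ} (hγ : 0 < γ) (hs : -1 < s) (hb : 0 < b) :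
    IntegrableOn (fun x : ℝ => (γ+x)⁻¹ * (x ^ s * Real.exp (-(b*x)))) (Set.Ioi 0) := by
  refine Integrable.mono' ((intOn_rpow_exp hs hb).const_mul γ⁻¹) ?_ ?_
  · refine ContinuousOn.aestronglyMeasurable ?_ measurableSet_Ioi
    refine ContinuousOn.mul (ContinuousOn.inv₀
      (continuous_const.add continuous_id).continuousOn
      (fun x hx => by have : (0:ℝ) < x := hx; positivity)) ?_
    refine ContinuousOn.mul (ContinuousOn.rpow_const continuousOn_id
      (fun x hx => Or.inl (ne_of_gt hx))) ?_
    exact (Real.continuous_exp.comp ((continuous_const.mul continuous_id).neg)).continuousOn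
  · refine (ae_restrict_iff' measurableSet_Ioi).mpr (ae_of_all _ fun x hx => ?_)
    have hx0 : (0:ℝ) < x := hx
    have hF : 0 ≤ x ^ s * Real.exp (-(b*x)) := by positivity
    rw [norm_mul, norm_inv, Real.norm_eq_abs, Real.norm_eq_abs,
      abs_of_nonneg (by linarith : (0:ℝ) ≤ γ + x), abs_of_nonneg hF]
    gcongr
    · linarith

lemma integral_comp_add_right_Ioi2 (g : ℝ → ℝ) (a d : ℝ) :
    ∫ x in Set.Ioi a, g (x + d) = ∫ x in Set.Ioi (a + d), g x := by
  rw [← integral_indicator measurableSet_Ioi, ← integral_indicator measurableSet_Ioi,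
    ← integral_add_right_eq_self (fun x => (Set.Ioi (a+d)).indicator g x) d]
  congr 1
  ext x
  simp only [Set.indicator_apply, Set.mem_Ioi, add_lt_add_iff_right]

lemma rhs_transform (γ k : ℝ) (hγ : 0 < γ) (hk : 1 < k) :
    ∫ t in Set.Ioi k, t ^ (-k) * Real.exp (-t)
      = γ ^ (1-k) * Real.exp (-k) *
        ∫ u in Set.Ioi (0:ℝ), (k/γ + u) ^ (-k) * Real.exp (-(γ * u)) := by
  have h1 : ∫ t in Set.Ioi k, t ^ (-k) * Real.exp (-t)
      = ∫ s in Set.Ioi (0:ℝ), (s + k) ^ (-k) * Real.exp (-(s + k)) := by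
    rw [integral_comp_add_right_Ioi2 (fun t => t ^ (-k) * Real.exp (-t)) 0 k, zero_add]
  have h2 := integral_comp_mul_left_Ioi (fun s => (s + k) ^ (-k) * Real.exp (-(s + k))) 0 hγ
  beta_reduce at h2
  rw [mul_zero, smul_eq_mul] at h2
  have h3 : γ * ∫ x in Set.Ioi (0:ℝ), (γ*x + k)^(-k) * Real.exp (-(γ*x+k))
      = ∫ s in Set.Ioi (0:ℝ), (s + k) ^ (-k) * Real.exp (-(s + k)) := by
    rw [h2, ← mul_assoc, mul_inv_cancel₀ hγ.ne', one_mul]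
  rw [h1, ← h3, ← integral_const_mul, ← integral_const_mul]
  refine setIntegral_congr_fun measurableSet_Ioi (fun u hu => ?_)
  have hu0 : (0:ℝ) < u := hu
  have hge : γ * u + k = γ * (k/γ + u) := by field_simp; ring
  have hpos : (0:ℝ) < k/γ + u := by positivity
  have e1 : γ * γ^(-k) = γ^(1-k) := by
    rw [show (1:ℝ)-k = 1 + -k by ring, Real.rpow_add hγ, Real.rpow_one]
  rw [hge, Real.mul_rpow hγ.le hpos.le,
    show -(γ*(k/γ+u)) = -(γ*u) + -k from by rw [← hge]; ring, Real.exp_add, ← e1]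
  ring

lemma middle_integral (γ k : ℝ) (hγ : 0 < γ) (hk : 1 < k) :
    ∫ x in Set.Ioi (0:ℝ), (γ + x)⁻¹ * (x ^ (k-1) * Real.exp (-(k/γ * x)))
      = Real.Gamma k * Real.exp k * γ ^ (k-1) *
        ∫ t in Set.Ioi k, t ^ (-k) * Real.exp (-t) := by
  have hk0 : (0:ℝ) < k := by linarith
  obtain ⟨c, hcdef⟩ : ∃ c : ℝ, c = k/γ := ⟨_, rfl⟩
  have hc : 0 < c := hcdef ▸ div_pos hk0 hγ
  simp only [← hcdef]
  have hcont : ContinuousOn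
      (fun p : ℝ×ℝ => p.1 ^ (k-1) * Real.exp (-(c*p.1)) * Real.exp (-((γ+p.1)*p.2)))
      (Set.Ioi 0 ×ˢ Set.Ioi 0) := by
    refine ContinuousOn.mul (ContinuousOn.mul ?_ ?_) ?_
    · exact ContinuousOn.rpow_const continuous_fst.continuousOn
        (fun p hp => Or.inl (ne_of_gt hp.1))
    · exact (Real.continuous_exp.comp ((continuous_const.mul continuous_fst).neg)).continuousOn
    · exact (Real.continuous_exp.comp
        (((continuous_const.add continuous_fst).mul continuous_snd).neg)).continuousOn
  have hmeas : AEStronglyMeasurable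
      (fun p : ℝ×ℝ => p.1 ^ (k-1) * Real.exp (-(c*p.1)) * Real.exp (-((γ+p.1)*p.2)))
      ((volume.restrict (Set.Ioi 0)).prod (volume.restrict (Set.Ioi 0))) := by
    rw [Measure.prod_restrict]
    exact hcont.aestronglyMeasurable (measurableSet_Ioi.prod measurableSet_Ioi)
  have hInt2 : IntegrableOn
      (fun x : ℝ => (γ+x)⁻¹ * (x ^ (k-1) * Real.exp (-(c*x)))) (Set.Ioi 0) :=
    intOn_inv_mul hγ (by linarith : (-1:ℝ) < k-1) hc
  have hprod : Integrable
      (Function.uncurry fun x u : ℝ =>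
        x ^ (k-1) * Real.exp (-(c*x)) * Real.exp (-((γ+x)*u)))
      ((volume.restrict (Set.Ioi 0)).prod (volume.restrict (Set.Ioi 0))) := by
    rw [Function.uncurry_def, integrable_prod_iff hmeas]
    constructor
    · refine (ae_restrict_iff' measurableSet_Ioi).mpr (ae_of_all _ fun x hx => ?_)
      have hx0 : (0:ℝ) < x := hx
      dsimp only
      exact (intOn_exp (by linarith : (0:ℝ) < γ + x)).const_mul _
    · refine hInt2.congr ((ae_restrict_iff' measurableSet_Ioi).mpr
        (ae_of_all _ fun x hx => ?_))
      have hx0 : (0:ℝ) < x := hx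
      dsimp only
      have hnorm : ∀ u : ℝ, ‖x ^ (k-1) * Real.exp (-(c*x)) * Real.exp (-((γ+x)*u))‖
          = x ^ (k-1) * Real.exp (-(c*x)) * Real.exp (-((γ+x)*u)) := fun u => by
        rw [Real.norm_eq_abs, abs_of_nonneg (by positivity)]
      simp only [hnorm]
      rw [integral_const_mul, integral_exp_Ioi (by linarith : (0:ℝ) < γ + x), one_div]
      ring
  calc ∫ x in Set.Ioi (0:ℝ), (γ + x)⁻¹ * (x ^ (k-1) * Real.exp (-(c * x)))
      = ∫ x in Set.Ioi (0:ℝ), ∫ u in Set.Ioi (0:ℝ),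
          x ^ (k-1) * Real.exp (-(c*x)) * Real.exp (-((γ+x)*u)) := by
        refine setIntegral_congr_fun measurableSet_Ioi (fun x hx => ?_)
        have hx0 : (0:ℝ) < x := hx
        rw [integral_const_mul, integral_exp_Ioi (by linarith : (0:ℝ) < γ + x), one_div]
        ring
    _ = ∫ u in Set.Ioi (0:ℝ), ∫ x in Set.Ioi (0:ℝ),
          x ^ (k-1) * Real.exp (-(c*x)) * Real.exp (-((γ+x)*u)) :=
        integral_integral_swap hprod
    _ = ∫ u in Set.Ioi (0:ℝ), Real.exp (-(γ*u)) * ((1/(c+u))^k * Real.Gamma k) := by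
        refine setIntegral_congr_fun measurableSet_Ioi (fun u hu => ?_)
        have hu0 : (0:ℝ) < u := hu
        have hcu : (0:ℝ) < c + u := by positivity
        rw [show (∫ x in Set.Ioi (0:ℝ),
              x ^ (k-1) * Real.exp (-(c*x)) * Real.exp (-((γ+x)*u)))
            = ∫ x in Set.Ioi (0:ℝ),
              Real.exp (-(γ*u)) * (x ^ (k-1) * Real.exp (-((c+u)*x))) from
          setIntegral_congr_fun measurableSet_Ioi (fun x hx => ?_)]
        · rw [integral_const_mul, Real.integral_rpow_mul_exp_neg_mul_Ioi hk0 hcu]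
        · rw [mul_assoc, ← Real.exp_add,
            show -(c*x) + -((γ+x)*u) = -(γ*u) + -((c+u)*x) by ring, Real.exp_add]
          ring
    _ = Real.Gamma k * ∫ u in Set.Ioi (0:ℝ), (c+u)^(-k) * Real.exp (-(γ*u)) := by
        rw [← integral_const_mul]
        refine setIntegral_congr_fun measurableSet_Ioi (fun u hu => ?_)
        have hu0 : (0:ℝ) < u := hu
        have hcu : (0:ℝ) < c + u := by positivity
        rw [one_div, Real.inv_rpow hcu.le, ← Real.rpow_neg hcu.le]
        ring
    _ = Real.Gamma k * Real.exp k * γ ^ (k-1) *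
        ∫ t in Set.Ioi k, t ^ (-k) * Real.exp (-t) := by
        rw [rhs_transform γ k hγ hk]
        simp only [← hcdef]
        set J := ∫ u in Set.Ioi (0:ℝ), (c + u) ^ (-k) * Real.exp (-(γ * u)) with hJ
        have e1 : Real.exp k * Real.exp (-k) = 1 := by
          rw [← Real.exp_add]; simp
        have e2 : γ^(k-1) * γ^(1-k) = 1 := by
          rw [← Real.rpow_add hγ]; norm_num
        have key : Real.exp k * γ^(k-1) * (γ^(1-k) * Real.exp (-k)) = 1 := by
          calc Real.exp k * γ^(k-1) * (γ^(1-k) * Real.exp (-k))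
              = (Real.exp k * Real.exp (-k)) * (γ^(k-1)*γ^(1-k)) := by ring
            _ = 1 := by rw [e1, e2, mul_one]
        calc Real.Gamma k * J = Real.Gamma k *
              (Real.exp k * γ^(k-1) * (γ^(1-k) * Real.exp (-k))) * J := by
              rw [key, mul_one]
          _ = Real.Gamma k * Real.exp k * γ ^ (k-1) * (γ ^ (1-k) * Real.exp (-k) * J) := by
              ring

/-- Expectation of the ISE under the exponential approximation, where the
Hill estimator `X` is `Gamma(k, γ/k)`-distributed.  The upper incomplete
gamma function `Γ(1-k, k)` is written as `∫_k^∞ t^{(1-k)-1} e^{-t} dt`. -/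
theorem expected_ISE_gamma (γ k : ℝ) (hγ : 0 < γ) (hk : 1 < k) :
    ∫ x in Set.Ioi (0 : ℝ),
        (1 / (2 * γ) - 2 / (γ + x) + 1 / (2 * x)) *
          (x ^ (k - 1) * Real.exp (-(x * k / γ)) * (k / γ) ^ k / Real.Gamma k)
      = 1 / (2 * γ)
        - (2 / γ) * (Real.exp k * k ^ k *
            ∫ t in Set.Ioi k, t ^ ((1 - k) - 1) * Real.exp (-t))
        + k / (2 * (k - 1) * γ) := by
  have hk0 : (0:ℝ) < k := by linarith
  have hk1 : (0:ℝ) < k - 1 := by linarith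
  have hc : (0:ℝ) < k/γ := div_pos hk0 hγ
  have hΓk : 0 < Real.Gamma k := Real.Gamma_pos_of_pos hk0
  have hΓk1 : 0 < Real.Gamma (k-1) := Real.Gamma_pos_of_pos hk1
  have hA : (0:ℝ) < (k/γ)^k := Real.rpow_pos_of_pos hc k
  simp only [show (1:ℝ) - k - 1 = -k from by ring]
  -- Step 1 : normalize the integrand
  have step1 : (∫ x in Set.Ioi (0 : ℝ),
        (1 / (2 * γ) - 2 / (γ + x) + 1 / (2 * x)) *
          (x ^ (k - 1) * Real.exp (-(x * k / γ)) * (k / γ) ^ k / Real.Gamma k))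
      = ∫ x in Set.Ioi (0 : ℝ), (k/γ)^k / Real.Gamma k *
          ((1/(2*γ)) * (x ^ (k-1) * Real.exp (-(k/γ*x)))
            - 2 * ((γ+x)⁻¹ * (x ^ (k-1) * Real.exp (-(k/γ*x))))
            + (1/2) * (x ^ (k-2) * Real.exp (-(k/γ*x)))) := by
    refine setIntegral_congr_fun measurableSet_Ioi (fun x hx => ?_)
    have hx0 : (0:ℝ) < x := hx
    have hxk : x^(k-2) = x^(k-1) * x⁻¹ := by
      rw [show k-2 = (k-1) + (-1) by ring, Real.rpow_add hx0, Real.rpow_neg_one]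
    have hex : x * k / γ = k/γ * x := by ring
    have hne1 : γ + x ≠ 0 := by positivity
    rw [hex, hxk]
    field_simp
  rw [step1]
  -- integrability of the three pieces
  have i1 : IntegrableOn (fun x : ℝ =>
      (1/(2*γ)) * (x ^ (k-1) * Real.exp (-(k/γ*x)))) (Set.Ioi 0) :=
    (intOn_rpow_exp (by linarith : (-1:ℝ) < k-1) hc).const_mul _
  have i2 : IntegrableOn (fun x : ℝ =>
      2 * ((γ+x)⁻¹ * (x ^ (k-1) * Real.exp (-(k/γ*x))))) (Set.Ioi 0) :=
    (intOn_inv_mul hγ (by linarith : (-1:ℝ) < k-1) hc).const_mul _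
  have i3 : IntegrableOn (fun x : ℝ =>
      (1/2) * (x ^ (k-2) * Real.exp (-(k/γ*x)))) (Set.Ioi 0) :=
    (intOn_rpow_exp (by linarith : (-1:ℝ) < k-2) hc).const_mul _
  have i12 : IntegrableOn (fun x : ℝ =>
      (1/(2*γ)) * (x ^ (k-1) * Real.exp (-(k/γ*x)))
        - 2 * ((γ+x)⁻¹ * (x ^ (k-1) * Real.exp (-(k/γ*x))))) (Set.Ioi 0) := i1.sub i2
  rw [integral_const_mul, integral_add i12 i3, integral_sub i1 i2]
  -- evaluate each
  have e1 : ∫ x in Set.Ioi (0:ℝ), (1/(2*γ)) * (x ^ (k-1) * Real.exp (-(k/γ*x)))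
      = (1/(2*γ)) * ((1/(k/γ))^k * Real.Gamma k) := by
    rw [integral_const_mul, Real.integral_rpow_mul_exp_neg_mul_Ioi hk0 hc]
  have e2 : ∫ x in Set.Ioi (0:ℝ), 2 * ((γ+x)⁻¹ * (x ^ (k-1) * Real.exp (-(k/γ*x))))
      = 2 * (Real.Gamma k * Real.exp k * γ ^ (k-1) *
          ∫ t in Set.Ioi k, t ^ (-k) * Real.exp (-t)) := by
    rw [integral_const_mul, middle_integral γ k hγ hk]
  have e3 : ∫ x in Set.Ioi (0:ℝ), (1/2) * (x ^ (k-2) * Real.exp (-(k/γ*x)))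
      = (1/2) * ((1/(k/γ))^(k-1) * Real.Gamma (k-1)) := by
    rw [integral_const_mul]
    simp only [show k - 2 = (k-1) - 1 from by ring]
    rw [Real.integral_rpow_mul_exp_neg_mul_Ioi hk1 hc]
  rw [e1, e2, e3, mul_add, mul_sub]
  -- algebraic identities
  have r1 : ((1:ℝ)/(k/γ))^k = ((k/γ)^k)⁻¹ := by
    rw [one_div, Real.inv_rpow hc.le]
  have r2 : (k/γ)^k * ((1/(k/γ))^(k-1)) = k/γ := by
    rw [one_div, Real.inv_rpow hc.le, ← Real.rpow_neg hc.le, ← Real.rpow_add hc,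
      show k + -(k-1) = 1 by ring, Real.rpow_one]
  have r3 : (k/γ)^k = k^k / γ^k := Real.div_rpow hk0.le hγ.le k
  have r4 : γ^(k-1) = γ^k / γ := by
    rw [Real.rpow_sub hγ, Real.rpow_one]
  have hγk : (0:ℝ) < γ^k := Real.rpow_pos_of_pos hγ k
  have r5 : (k/γ)^k * γ^(k-1) = k^k/γ := by
    rw [r3, r4]
    field_simp
  have hGam : Real.Gamma k = (k-1) * Real.Gamma (k-1) := by
    have h := Real.Gamma_add_one (by linarith : k - 1 ≠ 0)
    rw [sub_add_cancel] at h
    exact h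
  have q1 : (k/γ)^k / Real.Gamma k * ((1/(2*γ)) * ((1/(k/γ))^k * Real.Gamma k))
      = 1/(2*γ) := by
    rw [r1]
    field_simp
  have q2 : (k/γ)^k / Real.Gamma k * (2 * (Real.Gamma k * Real.exp k * γ ^ (k-1) *
        ∫ t in Set.Ioi k, t ^ (-k) * Real.exp (-t)))
      = 2/γ * (Real.exp k * k^k * ∫ t in Set.Ioi k, t ^ (-k) * Real.exp (-t)) := by
    set J := ∫ t in Set.Ioi k, t ^ (-k) * Real.exp (-t) with hJ
    have h : (k/γ)^k / Real.Gamma k * (2 * (Real.Gamma k * Real.exp k * γ ^ (k-1) * J))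
        = ((k/γ)^k * γ^(k-1)) * (2 * Real.exp k * J) * (Real.Gamma k / Real.Gamma k) := by
      ring
    rw [h, div_self hΓk.ne', mul_one, r5]
    field_simp
  have q3 : (k/γ)^k / Real.Gamma k * ((1/2) * ((1/(k/γ))^(k-1) * Real.Gamma (k-1)))
      = k/(2*(k-1)*γ) := by
    rw [hGam]
    have h : (k/γ)^k / ((k-1) * Real.Gamma (k-1)) *
          ((1/2) * ((1/(k/γ))^(k-1) * Real.Gamma (k-1)))
        = ((k/γ)^k * ((1/(k/γ))^(k-1))) *
            (Real.Gamma (k-1) / ((k-1) * Real.Gamma (k-1))) * (1/2) := by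
      ring
    rw [h, r2]
    rw [div_mul_eq_div_div_swap, div_self hΓk1.ne']
    rw [div_mul_div_comm, div_mul_div_comm, mul_one, mul_one]
    congr 1
    ring
  rw [q1, q2, q3]
end

section
/- Define ν(c) := 2c²/(1-c)² · (1 - c + c·log c) for c ∈ (0,1). Then 0 ≤ ν(c) ≤ 1 for all c ∈ (0,1), with ν(c) → 0 as c → 0⁺ and ν(c) → 1 as c → 1⁻. -/
open Real Filter Topology

private lemma keyG : ∀ u : ℝ, 1 ≤ u → 0 ≤ u^3 - 2*u^2 - u + 2 + 2*Real.log u := by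
  intro u hu
  set G : ℝ → ℝ := fun u => u^3 - 2*u^2 - u + 2 + 2*Real.log u with hG
  have hd : ∀ x : ℝ, 0 < x → HasDerivAt G (3*x^2 - 4*x - 1 + 2*x⁻¹) x := by
    intro x hx
    have h1 : HasDerivAt (fun u : ℝ => u^3 - 2*u^2 - u + 2) (3*x^2 - 4*x - 1) x := by
      have := (((hasDerivAt_pow 3 x).sub ((hasDerivAt_pow 2 x).const_mul 2)).sub
        (hasDerivAt_id x)).add_const 2
      exact this.congr_deriv (by push_cast; ring_nf)
    have h2 := (Real.hasDerivAt_log (ne_of_gt hx)).const_mul 2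
    have := h1.add h2
    exact this.congr_deriv (by ring)
  have hmono : MonotoneOn G (Set.Ici 1) := by
    apply monotoneOn_of_deriv_nonneg (convex_Ici 1)
    · intro x hx
      exact ((hd x (lt_of_lt_of_le one_pos hx)).continuousAt).continuousWithinAt
    · intro x hx
      rw [interior_Ici] at hx
      exact ((hd x (lt_trans one_pos hx)).differentiableAt).differentiableWithinAt
    · intro x hx
      rw [interior_Ici] at hx
      rw [(hd x (lt_trans one_pos hx)).deriv]
      have hx0 : (0:ℝ) < x := lt_trans one_pos hx
      have h2 : 4 - 2*x ≤ 2/x := by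
        rw [le_div_iff₀ hx0]; nlinarith [sq_nonneg (x-1)]
      rw [div_eq_mul_inv] at h2
      nlinarith [sq_nonneg (x-1)]
  have h1 : G 1 = 0 := by simp [hG]
  have := hmono (Set.self_mem_Ici) hu hu
  rw [h1] at this
  exact this

private lemma key2 {c : ℝ} (hc : 0 < c) (hc1 : c < 1) :
    2*c^2*(1 - c + c*Real.log c) ≤ (1-c)^2 := by
  have hu : 1 ≤ 1/c := by rw [le_div_iff₀ hc]; linarith
  have h := keyG (1/c) hu
  rw [one_div, Real.log_inv] at h
  have hc3 : (0:ℝ) < c^3 := by positivity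
  have h2 : 0 ≤ c^3 * ((c⁻¹)^3 - 2*(c⁻¹)^2 - c⁻¹ + 2 + 2*(-Real.log c)) :=
    mul_nonneg hc3.le h
  have h2' : c^3 * ((c⁻¹)^3 - 2*(c⁻¹)^2 - c⁻¹ + 2 + 2*(-Real.log c)) =
      1 - 2*c - c^2 + 2*c^3 - 2*c^3*Real.log c := by
    field_simp
    ring
  rw [h2'] at h2
  nlinarith [h2]

private lemma keyNonneg {c : ℝ} (hc : 0 < c) : 0 ≤ 1 - c + c*Real.log c := by
  have h := Real.log_le_sub_one_of_pos (show (0:ℝ) < c⁻¹ by positivity)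
  rw [Real.log_inv] at h
  have hinv : c * c⁻¹ = 1 := mul_inv_cancel₀ (ne_of_gt hc)
  nlinarith [mul_le_mul_of_nonneg_left h hc.le]

/-- Properties of the asymptotic variance factor
`ν(c) = 2c²/(1-c)²·(1 - c + c log c)` on `(0,1)`. -/
theorem nu_properties :
    (∀ c ∈ Set.Ioo (0 : ℝ) 1,
        0 ≤ 2 * c ^ 2 / (1 - c) ^ 2 * (1 - c + c * Real.log c) ∧
        2 * c ^ 2 / (1 - c) ^ 2 * (1 - c + c * Real.log c) ≤ 1) ∧
    Tendsto (fun c : ℝ => 2 * c ^ 2 / (1 - c) ^ 2 * (1 - c + c * Real.log c))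
      (𝓝[>] 0) (𝓝 0) ∧
    Tendsto (fun c : ℝ => 2 * c ^ 2 / (1 - c) ^ 2 * (1 - c + c * Real.log c))
      (𝓝[<] 1) (𝓝 1) := by
  refine ⟨?_, ?_, ?_⟩
  · rintro c ⟨hc, hc1⟩
    have hden : (0:ℝ) < (1-c)^2 := pow_pos (by linarith) 2
    constructor
    · exact mul_nonneg (by positivity) (keyNonneg hc)
    · rw [div_mul_eq_mul_div, div_le_one hden]
      exact key2 hc hc1
  · -- limit at 0
    have hcont : Tendsto (fun c : ℝ => 2 * c ^ 2 / (1 - c) ^ 2 * (1 - c + c * Real.log c))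
        (𝓝 0) (𝓝 0) := by
      have h1 : Tendsto (fun c : ℝ => 2 * c ^ 2 / (1 - c) ^ 2) (𝓝 0) (𝓝 0) := by
        have : ContinuousAt (fun c : ℝ => 2 * c ^ 2 / (1 - c) ^ 2) 0 := by
          apply ContinuousAt.div
          · fun_prop
          · fun_prop
          · norm_num
        simpa using this.tendsto
      have h2 : Tendsto (fun c : ℝ => 1 - c + c * Real.log c) (𝓝 0) (𝓝 1) := by
        have : ContinuousAt (fun c : ℝ => 1 - c + c * Real.log c) 0 := by
          apply ContinuousAt.add
          · fun_prop
          · exact Real.continuous_mul_log.continuousAt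
        simpa [Real.log_zero] using this.tendsto
      simpa using h1.mul h2
    exact hcont.mono_left nhdsWithin_le_nhds
  · -- limit at 1
    have hquot : Tendsto (fun c : ℝ => (1 - c + c * Real.log c) / (1 - c)^2)
        (𝓝[<] (1:ℝ)) (𝓝 (1/2)) := by
      apply HasDerivAt.lhopital_zero_nhdsLT
        (f' := fun c => Real.log c) (g' := fun c => -2*(1-c))
      · filter_upwards [(eventually_gt_nhds one_pos).filter_mono nhdsWithin_le_nhds]
          with x (hx : (0:ℝ) < x)
        have := ((hasDerivAt_id x).const_sub 1).add (Real.hasDerivAt_mul_log hx.ne')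
        exact this.congr_deriv (by ring)
      · filter_upwards with x
        have : HasDerivAt (fun c : ℝ => (1-c)^2) (-2*(1-x)) x := by
          have := ((hasDerivAt_id x).const_sub 1).pow 2
          refine this.congr_deriv ?_
          simp only [id_eq]; push_cast; ring
        exact this
      · filter_upwards [self_mem_nhdsWithin] with x (hx : x < 1)
        intro h; nlinarith
      · have : ContinuousAt (fun c : ℝ => 1 - c + c * Real.log c) 1 := by
          apply ContinuousAt.add
          · fun_prop
          · exact Real.continuous_mul_log.continuousAt
        have := this.tendsto.mono_left (nhdsWithin_le_nhds (s := Set.Iio 1))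
        simpa using this
      · have : ContinuousAt (fun c : ℝ => (1-c)^2) 1 := by fun_prop
        have := this.tendsto.mono_left (nhdsWithin_le_nhds (s := Set.Iio 1))
        simpa using this
      · -- log c / (-2(1-c)) → 1/2
        have hs : Tendsto (slope Real.log 1) (𝓝[≠] (1:ℝ)) (𝓝 1) :=
          hasDerivAt_iff_tendsto_slope.mp (by simpa using Real.hasDerivAt_log one_ne_zero)
        have hs' := (hs.mono_left (nhdsWithin_mono _
          (fun x (hx : x ∈ Set.Iio 1) => ne_of_lt hx))).div_const 2
        have : (1:ℝ)/2 = 1/2 := rfl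
        refine Tendsto.congr (f₁ := fun x => slope Real.log 1 x / 2) ?_ hs'
        intro x
        rw [show -2*(1-x) = (x-1)*2 by ring, ← div_div]
        simp [slope, Real.log_one, div_eq_inv_mul]
    have hfactor : Tendsto (fun c : ℝ => 2 * c ^ 2) (𝓝[<] (1:ℝ)) (𝓝 2) := by
      have : ContinuousAt (fun c : ℝ => 2 * c ^ 2) 1 := by fun_prop
      have := this.tendsto.mono_left (nhdsWithin_le_nhds (s := Set.Iio 1))
      simpa using this
    have := hfactor.mul hquot
    norm_num at this
    convert this using 2 with c
    ring
end

section
/- With notation as before (E_i i.i.d. Exp(1), e_i^k harmonic tails, R_K = (1/√K)Σ_{i=1}^K(e_{i+1}^K E_i - 1), P_k = (1/√k)Σ_{i=1}^k(E_i - 1)), for k, K → ∞ with k/K → c ∈ (0,1), Cov(R_K, P_k) → (c - c·log c)/√c = √c(1 - log c). -/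
open MeasureTheory ProbabilityTheory Real Filter Finset Topology

open scoped NNReal ENNReal

lemma expMeasure_moment (n : ℕ) :
    Integrable (fun x : ℝ => x ^ n) (expMeasure 1) ∧
      ∫ x, x ^ n ∂(expMeasure 1) = (Nat.factorial n : ℝ) := by
  have hpdf : ∀ x : ℝ, gammaPDFReal 1 1 x = if 0 ≤ x then Real.exp (-x) else 0 := by
    intro x
    unfold gammaPDFReal
    split <;> simp [Real.Gamma_one]
  set f : ℝ → ℝ≥0 := fun x => Real.toNNReal (gammaPDFReal 1 1 x) with hf
  have hfm : Measurable f := (measurable_gammaPDFReal 1 1).real_toNNReal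
  have hμ : expMeasure 1 = MeasureTheory.volume.withDensity (fun x => (f x : ℝ≥0∞)) := rfl
  have hkey : (fun x : ℝ => f x • x ^ n)
      = Set.indicator (Set.Ici (0:ℝ)) (fun x => Real.exp (-x) * x ^ n) := by
    funext x
    rw [NNReal.smul_def, smul_eq_mul, Real.coe_toNNReal _ (gammaPDFReal_nonneg one_pos one_pos x),
      hpdf]
    by_cases h : 0 ≤ x <;> simp [Set.indicator, h]
  have hG : IntegrableOn (fun x : ℝ => Real.exp (-x) * x ^ n) (Set.Ioi 0) := by
    have := Real.GammaIntegral_convergent (s := (n : ℝ) + 1) (by positivity)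
    refine this.congr_fun ?_ measurableSet_Ioi
    intro x _
    norm_num [Real.rpow_natCast]
  have hInd : Integrable (Set.indicator (Set.Ici (0:ℝ)) (fun x => Real.exp (-x) * x ^ n)) := by
    rw [integrable_indicator_iff measurableSet_Ici]
    exact (integrableOn_Ici_iff_integrableOn_Ioi (by simp)).2 hG
  constructor
  · rw [hμ, integrable_withDensity_iff_integrable_smul hfm, hkey]
    exact hInd
  · rw [hμ, integral_withDensity_eq_integral_smul hfm, hkey,
      integral_indicator measurableSet_Ici, MeasureTheory.integral_Ici_eq_integral_Ioi]
    have := Real.Gamma_eq_integral (s := (n : ℝ) + 1) (by positivity)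
    rw [show ((n:ℝ) + 1) = ((n:ℕ) + 1 : ℝ) by norm_num] at this
    have h2 : ∫ x in Set.Ioi (0:ℝ), Real.exp (-x) * x ^ ((n:ℝ) + 1 - 1)
        = ∫ x in Set.Ioi (0:ℝ), Real.exp (-x) * x ^ n := by
      refine setIntegral_congr_fun measurableSet_Ioi (fun x _ => ?_)
      rw [add_sub_cancel_right, Real.rpow_natCast]
    rw [← h2, ← this, Real.Gamma_nat_eq_factorial]

noncomputable def hsum (m : ℕ) : ℝ := ∑ l ∈ Finset.Icc 1 m, (1 / (l : ℝ))

lemma hsum_eq_harmonic (m : ℕ) : hsum m = (harmonic m : ℝ) := by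
  rw [harmonic_eq_sum_Icc]
  push_cast
  simp [hsum, one_div]

lemma hsum_succ (m : ℕ) : hsum (m + 1) = hsum m + 1 / (m + 1 : ℝ) := by
  unfold hsum
  rw [Finset.sum_Icc_succ_top (Nat.le_add_left 1 m)]
  push_cast
  ring

lemma sum_hsum (m : ℕ) : ∑ j ∈ Finset.Icc 1 m, hsum j = (m + 1) * hsum m - m := by
  induction m with
  | zero => simp [hsum]
  | succ p ih =>
      rw [Finset.sum_Icc_succ_top (Nat.le_add_left 1 p), ih, hsum_succ]
      have hp : ((p : ℝ) + 1) ≠ 0 := by positivity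
      push_cast
      field_simp
      ring

lemma tail_eq (j m : ℕ) (h : j ≤ m) :
    ∑ l ∈ Finset.Icc (j + 1) m, (1 / (l : ℝ)) = hsum m - hsum j := by
  have h0 := Finset.sum_Ioc_consecutive (fun l : ℕ => 1 / (l : ℝ)) (Nat.zero_le j) h
  unfold hsum
  rw [show Finset.Icc 1 m = Finset.Ioc 0 m from (Finset.Icc_add_one_left_eq_Ioc 0 m).symm ▸ rfl,
    show Finset.Icc 1 j = Finset.Ioc 0 j from (Finset.Icc_add_one_left_eq_Ioc 0 j).symm ▸ rfl,
    show Finset.Icc (j+1) m = Finset.Ioc j m from Finset.Icc_add_one_left_eq_Ioc j m]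
  linarith

/-- Covariance limit `Cov(R_K, P_k) → (c - c log c)/√c = √c(1 - log c)` for
`R_K = (1/√K) Σ_{i=1}^K (e_{i+1}^K E_i - 1)`, `P_k = (1/√k) Σ_{i=1}^k (E_i - 1)`
with `E_i` i.i.d. standard exponential and `k/K → c ∈ (0,1)`. -/
theorem cov_RK_Pk_limit
    {Ω : Type*} [MeasurableSpace Ω] (μ : Measure Ω) [IsProbabilityMeasure μ]
    (E : ℕ → Ω → ℝ) (hmeas : ∀ i, Measurable (E i))
    (hindep : iIndepFun E μ)
    (hdist : ∀ i, Measure.map (E i) μ = expMeasure 1)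
    (k K : ℕ → ℕ) (hk : Tendsto k atTop atTop) (hK : Tendsto K atTop atTop)
    (c : ℝ) (hc : c ∈ Set.Ioo (0 : ℝ) 1)
    (hratio : Tendsto (fun n => (k n : ℝ) / (K n : ℝ)) atTop (𝓝 c)) :
    let e : ℕ → ℕ → ℝ := fun i m => ∑ l ∈ Finset.Icc i m, (1 / (l : ℝ))
    let R : ℕ → Ω → ℝ := fun m ω =>
      (1 / Real.sqrt m) * ∑ i ∈ Finset.Icc 1 m, (e (i + 1) m * E i ω - 1)
    let P : ℕ → Ω → ℝ := fun m ω =>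
      (1 / Real.sqrt m) * ∑ i ∈ Finset.Icc 1 m, (E i ω - 1)
    Tendsto (fun n =>
        (∫ ω, R (K n) ω * P (k n) ω ∂μ)
          - (∫ ω, R (K n) ω ∂μ) * (∫ ω, P (k n) ω ∂μ))
      atTop (𝓝 ((c - c * Real.log c) / Real.sqrt c)) := by
  intro e R P
  obtain ⟨hc0, hc1⟩ := hc
  have hR : ∀ (m : ℕ) (ω : Ω), R m ω = (1 / Real.sqrt m) * ∑ i ∈ Finset.Icc 1 m,
      ((∑ l ∈ Finset.Icc (i + 1) m, (1 / (l : ℝ))) * E i ω - 1) := fun m ω => rfl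
  have hP : ∀ (m : ℕ) (ω : Ω), P m ω = (1 / Real.sqrt m) * ∑ i ∈ Finset.Icc 1 m,
      (E i ω - 1) := fun m ω => rfl
  simp only [hR, hP]
  -- Moments and integrability
  have hInt1 : ∀ i, Integrable (E i) μ := by
    intro i
    have h1 : Integrable (fun x : ℝ => x) (expMeasure 1) := by
      simpa using (expMeasure_moment 1).1
    have h2 := (integrable_map_measure aestronglyMeasurable_id
      (hmeas i).aemeasurable).mp (by rw [hdist i]; exact h1)
    simpa [Function.comp] using h2
  have hMom1 : ∀ i, ∫ ω, E i ω ∂μ = 1 := by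
    intro i
    have h0 : ∫ x : ℝ, x ∂(expMeasure 1) = 1 := by
      simpa using (expMeasure_moment 1).2
    have h1 : ∫ x : ℝ, x ∂(Measure.map (E i) μ) = ∫ ω, E i ω ∂μ :=
      integral_map (hmeas i).aemeasurable aestronglyMeasurable_id
    rw [hdist i, h0] at h1
    exact h1.symm
  have hInt2 : ∀ i, Integrable (fun ω => E i ω ^ 2) μ := by
    intro i
    have h1 : Integrable (fun x : ℝ => x ^ 2) (expMeasure 1) := (expMeasure_moment 2).1
    have h2 := (integrable_map_measure
      ((measurable_id.pow_const 2).aestronglyMeasurable)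
      (hmeas i).aemeasurable).mp (by rw [hdist i]; exact h1)
    exact h2
  have hMom2 : ∀ i, ∫ ω, E i ω ^ 2 ∂μ = 2 := by
    intro i
    have h0 : ∫ x : ℝ, x ^ 2 ∂(expMeasure 1) = 2 := by
      have := (expMeasure_moment 2).2
      norm_num [Nat.factorial] at this
      exact this
    have h1 : ∫ x : ℝ, x ^ 2 ∂(Measure.map (E i) μ) = ∫ ω, E i ω ^ 2 ∂μ :=
      integral_map (hmeas i).aemeasurable ((measurable_id.pow_const 2).aestronglyMeasurable)
    rw [hdist i, h0] at h1
    exact h1.symm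
  have hIntMul : ∀ i j, Integrable (fun ω => E i ω * E j ω) μ := by
    intro i j
    by_cases h : i = j
    · subst h
      simpa [pow_two] using hInt2 i
    · have := (hindep.indepFun h).integrable_mul (hInt1 i) (hInt1 j)
      exact this
  have hMomMul : ∀ i j, ∫ ω, E i ω * E j ω ∂μ = if i = j then 2 else 1 := by
    intro i j
    by_cases h : i = j
    · subst h
      simp only [if_pos rfl]
      simp_rw [← pow_two]
      exact hMom2 i
    · have := (hindep.indepFun h).integral_mul_eq_mul_integral (hInt1 i).aestronglyMeasurable
        (hInt1 j).aestronglyMeasurable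
      simp only [if_neg h]
      simpa [Pi.mul_apply, hMom1 i, hMom1 j] using this
  -- ∫ P = 0
  have hPint : ∀ kk : ℕ,
      (∫ ω, (1 / Real.sqrt kk) * ∑ i ∈ Finset.Icc 1 kk, (E i ω - 1) ∂μ) = 0 := by
    intro kk
    have hint : ∀ i : ℕ, Integrable (fun ω => E i ω - 1) μ :=
      fun i => (hInt1 i).sub (integrable_const 1)
    rw [integral_const_mul, integral_finset_sum _ (fun i _ => hint i)]
    have h0 : ∀ i ∈ Finset.Icc 1 kk, ∫ ω, (E i ω - 1) ∂μ = 0 := fun i _ => by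
      rw [integral_sub (hInt1 i) (integrable_const 1), hMom1 i, integral_const]
      simp
    rw [Finset.sum_congr rfl h0]
    simp
  -- main covariance identity
  have covEq : ∀ kk KK : ℕ, 1 ≤ kk → kk ≤ KK →
      (∫ ω, ((1 / Real.sqrt KK) * ∑ i ∈ Finset.Icc 1 KK,
          ((∑ l ∈ Finset.Icc (i + 1) KK, (1 / (l : ℝ))) * E i ω - 1))
        * ((1 / Real.sqrt kk) * ∑ i ∈ Finset.Icc 1 kk, (E i ω - 1)) ∂μ)
      - (∫ ω, (1 / Real.sqrt KK) * ∑ i ∈ Finset.Icc 1 KK,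
          ((∑ l ∈ Finset.Icc (i + 1) KK, (1 / (l : ℝ))) * E i ω - 1) ∂μ)
        * (∫ ω, (1 / Real.sqrt kk) * ∑ i ∈ Finset.Icc 1 kk, (E i ω - 1) ∂μ)
      = Real.sqrt ((kk : ℝ) / (KK : ℝ))
          * (1 + (hsum KK - hsum kk) - hsum kk / (kk : ℝ)) := by
    intro kk KK h1 hle
    set a : ℕ → ℝ := fun i => ∑ l ∈ Finset.Icc (i + 1) KK, (1 / (l : ℝ)) with ha
    rw [hPint kk, mul_zero, sub_zero]
    have hterm : ∀ i j : ℕ, Integrable (fun ω => (a i * E i ω - 1) * (E j ω - 1)) μ := by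
      intro i j
      have hexp : (fun ω => (a i * E i ω - 1) * (E j ω - 1))
          = fun ω => a i * (E i ω * E j ω) - a i * E i ω - E j ω + 1 := by
        funext ω; ring
      rw [hexp]
      exact ((((hIntMul i j).const_mul (a i)).sub ((hInt1 i).const_mul (a i))).sub
        (hInt1 j)).add (integrable_const 1)
    have htermInt : ∀ i j : ℕ,
        ∫ ω, (a i * E i ω - 1) * (E j ω - 1) ∂μ = if i = j then a i else 0 := by
      intro i j
      have hexp : (fun ω => (a i * E i ω - 1) * (E j ω - 1))
          = fun ω => a i * (E i ω * E j ω) - a i * E i ω - E j ω + 1 := by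
        funext ω; ring
      have h4 : Integrable (fun ω => a i * (E i ω * E j ω)) μ := (hIntMul i j).const_mul (a i)
      have h5 : Integrable (fun ω => a i * E i ω) μ := (hInt1 i).const_mul (a i)
      have h6 : Integrable (fun ω => a i * (E i ω * E j ω) - a i * E i ω) μ := h4.sub h5
      have h7 : Integrable (fun ω => a i * (E i ω * E j ω) - a i * E i ω - E j ω) μ :=
        h6.sub (hInt1 j)
      rw [hexp, integral_add h7 (integrable_const 1), integral_sub h6 (hInt1 j),
        integral_sub h4 h5, integral_const_mul, integral_const_mul, hMomMul i j, hMom1 i,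
        hMom1 j, integral_const, probReal_univ]
      by_cases h : i = j <;> simp [h] <;> ring
    have hprod : ∀ ω : Ω, ((1 / Real.sqrt KK) * ∑ i ∈ Finset.Icc 1 KK, (a i * E i ω - 1))
        * ((1 / Real.sqrt kk) * ∑ i ∈ Finset.Icc 1 kk, (E i ω - 1))
        = (1 / Real.sqrt KK) * (1 / Real.sqrt kk)
          * ∑ i ∈ Finset.Icc 1 KK, ∑ j ∈ Finset.Icc 1 kk,
              (a i * E i ω - 1) * (E j ω - 1) := by
      intro ω
      rw [show ((1 / Real.sqrt KK) * ∑ i ∈ Finset.Icc 1 KK, (a i * E i ω - 1))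
          * ((1 / Real.sqrt kk) * ∑ i ∈ Finset.Icc 1 kk, (E i ω - 1))
          = (1 / Real.sqrt KK) * (1 / Real.sqrt kk)
            * ((∑ i ∈ Finset.Icc 1 KK, (a i * E i ω - 1))
              * (∑ j ∈ Finset.Icc 1 kk, (E j ω - 1))) from by ring,
        Finset.sum_mul_sum]
    change ∫ ω, ((1 / Real.sqrt KK) * ∑ i ∈ Finset.Icc 1 KK, (a i * E i ω - 1))
        * ((1 / Real.sqrt kk) * ∑ i ∈ Finset.Icc 1 kk, (E i ω - 1)) ∂μ = _
    simp_rw [hprod]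
    rw [integral_const_mul, integral_finset_sum _
      (fun i _ => integrable_finset_sum _ (fun j _ => hterm i j))]
    have hinner : ∀ i ∈ Finset.Icc 1 KK,
        (∫ ω, ∑ j ∈ Finset.Icc 1 kk, (a i * E i ω - 1) * (E j ω - 1) ∂μ)
          = ∑ j ∈ Finset.Icc 1 kk, (if i = j then a i else 0) := by
      intro i _
      rw [integral_finset_sum _ (fun j _ => hterm i j)]
      exact Finset.sum_congr rfl (fun j _ => htermInt i j)
    rw [Finset.sum_congr rfl hinner, Finset.sum_comm]
    have hsum1 : ∀ j ∈ Finset.Icc 1 kk,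
        (∑ i ∈ Finset.Icc 1 KK, if i = j then a i else 0) = a j := by
      intro j hj
      rw [Finset.sum_ite_eq' (Finset.Icc 1 KK) j a, if_pos]
      rw [Finset.mem_Icc] at hj ⊢
      exact ⟨hj.1, le_trans hj.2 hle⟩
    rw [Finset.sum_congr rfl hsum1]
    have haj : ∀ j ∈ Finset.Icc 1 kk, a j = hsum KK - hsum j := fun j hj =>
      tail_eq j KK (le_trans (Finset.mem_Icc.mp hj).2 hle)
    rw [Finset.sum_congr rfl haj, Finset.sum_sub_distrib, Finset.sum_const, sum_hsum,
      Nat.card_Icc]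
    simp only [Nat.add_sub_cancel, nsmul_eq_mul]
    have hkpos : (0 : ℝ) < (kk : ℝ) := by exact_mod_cast h1
    have hKpos : (0 : ℝ) < (KK : ℝ) := by
      have : 1 ≤ KK := le_trans h1 hle
      exact_mod_cast this
    rw [Real.sqrt_div hkpos.le]
    set s := Real.sqrt (kk : ℝ) with hs
    set t := Real.sqrt (KK : ℝ) with ht
    have hs0 : 0 < s := Real.sqrt_pos.mpr hkpos
    have ht0 : 0 < t := Real.sqrt_pos.mpr hKpos
    have hss : s ^ 2 = (kk : ℝ) := Real.sq_sqrt hkpos.le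
    rw [← hss]
    field_simp
    ring
  -- eventual equality region
  have hkK : ∀ᶠ n in atTop, 1 ≤ k n ∧ k n ≤ K n := by
    have h1 := hk.eventually_ge_atTop 1
    have h2 := hK.eventually_ge_atTop 1
    have h3 := hratio.eventually_lt_const hc1
    filter_upwards [h1, h2, h3] with n hn1 hn2 hn3
    refine ⟨hn1, ?_⟩
    by_contra hcon
    push_neg at hcon
    have hKpos : (0 : ℝ) < (K n : ℝ) := by exact_mod_cast hn2
    have : (1 : ℝ) ≤ (k n : ℝ) / (K n : ℝ) := by
      rw [le_div_iff₀ hKpos, one_mul]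
      exact_mod_cast hcon.le
    linarith
  -- limits
  have hk' : Tendsto (fun n => ((k n : ℕ) : ℝ)) atTop atTop :=
    tendsto_natCast_atTop_atTop.comp hk
  have hγ := Real.tendsto_harmonic_sub_log
  have tD : Tendsto (fun n => hsum (K n) - hsum (k n)) atTop (𝓝 (- Real.log c)) := by
    have h1 : Tendsto (fun n => (((harmonic (K n) : ℝ) - Real.log (K n))
        - ((harmonic (k n) : ℝ) - Real.log (k n))) - Real.log ((k n : ℝ) / (K n : ℝ)))
        atTop (𝓝 ((Real.eulerMascheroniConstant - Real.eulerMascheroniConstant)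
          - Real.log c)) :=
      ((hγ.comp hK).sub (hγ.comp hk)).sub
        (((Real.continuousAt_log hc0.ne').tendsto).comp hratio)
    have h2 : ∀ᶠ n in atTop, (((harmonic (K n) : ℝ) - Real.log (K n))
        - ((harmonic (k n) : ℝ) - Real.log (k n))) - Real.log ((k n : ℝ) / (K n : ℝ))
        = hsum (K n) - hsum (k n) := by
      filter_upwards [hk.eventually_ge_atTop 1, hK.eventually_ge_atTop 1] with n hn1 hn2
      have hkn : ((k n : ℕ) : ℝ) ≠ 0 := by
        have : (0:ℕ) < k n := hn1
        exact_mod_cast this.ne'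
      have hKn : ((K n : ℕ) : ℝ) ≠ 0 := by
        have : (0:ℕ) < K n := hn2
        exact_mod_cast this.ne'
      rw [Real.log_div hkn hKn, hsum_eq_harmonic, hsum_eq_harmonic]
      ring
    have h3 := h1.congr' h2
    simpa using h3
  have tQ : Tendsto (fun n => hsum (k n) / (k n : ℝ)) atTop (𝓝 0) := by
    have q1 : Tendsto (fun n => ((harmonic (k n) : ℝ) - Real.log (k n)) / (k n : ℝ))
        atTop (𝓝 0) := Tendsto.div_atTop (hγ.comp hk) hk'
    have q2 : Tendsto (fun n => Real.log ((k n : ℕ) : ℝ) / ((k n : ℕ) : ℝ)) atTop (𝓝 0) :=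
      (Real.isLittleO_log_id_atTop.tendsto_div_nhds_zero).comp hk'
    have q3 := q1.add q2
    have q4 : ∀ n, ((harmonic (k n) : ℝ) - Real.log (k n)) / (k n : ℝ)
        + Real.log ((k n : ℕ) : ℝ) / ((k n : ℕ) : ℝ) = hsum (k n) / (k n : ℝ) := by
      intro n
      rw [← add_div, sub_add_cancel, hsum_eq_harmonic]
    simpa using q3.congr q4
  have hGlim : Tendsto (fun n => Real.sqrt ((k n : ℝ) / (K n : ℝ))
      * (1 + (hsum (K n) - hsum (k n)) - hsum (k n) / (k n : ℝ))) atTop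
      (𝓝 (Real.sqrt c * (1 + (- Real.log c) - 0))) :=
    ((Real.continuous_sqrt.tendsto c).comp hratio).mul
      ((tendsto_const_nhds.add tD).sub tQ)
  have hval : (c - c * Real.log c) / Real.sqrt c
      = Real.sqrt c * (1 + (- Real.log c) - 0) := by
    have h2 : Real.sqrt c * Real.sqrt c = c := Real.mul_self_sqrt hc0.le
    have hsne : Real.sqrt c ≠ 0 := by positivity
    rw [div_eq_iff hsne]
    linear_combination (Real.log c - 1) * h2
  rw [hval]
  refine hGlim.congr' ?_
  filter_upwards [hkK] with n hn
  exact (covEq _ _ hn.1 hn.2).symm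
end
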